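/- For every finite simple graph G with at least one vertex, b*(G) ≤ max_{u ∈ V(G)} b*(G[B(u,2)]), where G[B(u,2)] is the subgraph of G induced by the ball of radius 2 centered at u. -/

import Mathlib

variable {V : Type*} {W : Type*}

/-- A proper coloring of `G` using colors `{1, …, k}`: colors lie in `{1,…,k}`,
adjacent vertices get different colors, and every color in `{1,…,k}` is used. -/
def IsProperKColoring (G : SimpleGraph V) (k : ℕ) (c : V → ℕ) : Prop :=
  (∀ v, c v ∈ Set.Icc 1 k) ∧
  (∀ u v, G.Adj u v → c u ≠ c v) ∧
  (∀ j ∈ Set.Icc 1 k, ∃ v, c v = j)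

/-- `u` is a b-vertex: every color `j ∈ {1,…,k}` with `j ≠ c u` appears on a neighbor of `u`. -/
def IsBVertex (G : SimpleGraph V) (k : ℕ) (c : V → ℕ) (u : V) : Prop :=
  ∀ j ∈ Set.Icc 1 k, j ≠ c u → ∃ w, G.Adj u w ∧ c w = j

/-- `u` is a nice vertex: it is a b-vertex and for every color `j ≠ c u` in `{1,…,k}`
it has a b-vertex neighbor of color `j`. -/
def IsNiceVertex (G : SimpleGraph V) (k : ℕ) (c : V → ℕ) (u : V) : Prop :=
  IsBVertex G k c u ∧
  ∀ j ∈ Set.Icc 1 k, j ≠ c u → ∃ w, G.Adj u w ∧ c w = j ∧ IsBVertex G k c w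

/-- A Grundy coloring using `k` colors: proper, and every vertex of color `j` has a
neighbor of each smaller color `i ≥ 1`. -/
def IsGrundyColoring (G : SimpleGraph V) (k : ℕ) (c : V → ℕ) : Prop :=
  IsProperKColoring G k c ∧
  ∀ i j : ℕ, 1 ≤ i → i < j → j ≤ k → ∀ v, c v = j → ∃ w, G.Adj v w ∧ c w = i

/-- A z-coloring: a Grundy coloring with a nice vertex of (top) color `k`. -/
def IsZColoring (G : SimpleGraph V) (k : ℕ) (c : V → ℕ) : Prop :=
  IsGrundyColoring G k c ∧ ∃ u, c u = k ∧ IsNiceVertex G k c u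

/-- A b*-coloring: a proper coloring with a nice vertex of (top) color `k`. -/
def IsBStarColoring (G : SimpleGraph V) (k : ℕ) (c : V → ℕ) : Prop :=
  IsProperKColoring G k c ∧ ∃ u, c u = k ∧ IsNiceVertex G k c u

/-- The z-chromatic number: largest `k` admitting a z-coloring with `k` colors. -/
noncomputable def zNum (G : SimpleGraph V) : ℕ :=
  sSup {k | ∃ c : V → ℕ, IsZColoring G k c}

/-- The b*-chromatic number: largest `k` admitting a b*-coloring with `k` colors. -/
noncomputable def bStar (G : SimpleGraph V) : ℕ :=
  sSup {k | ∃ c : V → ℕ, IsBStarColoring G k c}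

/-- `m*(G)`: the largest `k` such that some vertex `u` has `k` distinct neighbors,
each of degree at least `k`. -/
noncomputable def mStar (G : SimpleGraph V) : ℕ :=
  sSup {k | ∃ (u : V) (s : Finset V), (↑s : Set V) ⊆ G.neighborSet u ∧ s.card = k ∧
    ∀ v ∈ s, k ≤ (G.neighborSet v).ncard}

/-- The clique number `ω(G)`. -/
noncomputable def omegaNum (G : SimpleGraph V) : ℕ :=
  sSup {n | ∃ s : Finset V, G.IsNClique n s}
/-- The ball of radius `r` centered at `u`: vertices at graph distance at most `r`
from `u` (i.e. joined to `u` by a walk of length at most `r`). -/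
def ball (G : SimpleGraph V) (u : V) (r : ℕ) : Set V :=
  {v | ∃ p : G.Walk u v, p.length ≤ r}

/-!
A nice vertex `u` of a b*-coloring, its neighbours and their neighbours all lie in `B(u,2)`,
and every colour already occurs on `u` or a neighbour of `u`. So the coloring restricted to
`G[B(u,2)]` is still a b*-coloring with the same number of colours, with `u` still nice.
-/

lemma mem_ball_self (G : SimpleGraph W) (u : W) (r : ℕ) : u ∈ ball G u r :=
  ⟨.nil, Nat.zero_le r⟩

lemma mem_ball_succ_of_adj {G : SimpleGraph W} {u v w : W} {r : ℕ} (hv : v ∈ ball G u r) (h : G.Adj v w) : w ∈ ball G u (r + 1) := by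
  obtain ⟨p, hp⟩ := hv
  exact ⟨p.concat h, by rw [SimpleGraph.Walk.length_concat]; omega⟩

section Restrict

variable {G : SimpleGraph W} {k : ℕ} {c : W → ℕ} {s : Set W} {u : W}

lemma IsProperKColoring.le_natCard [Finite W] (hc : IsProperKColoring G k c) :
    k ≤ Nat.card W := by
  obtain ⟨-, -, hsurj⟩ := hc
  choose f hf using hsurj
  have hinj : Function.Injective fun j : Set.Icc 1 k => f j j.2 := fun a b hab =>
    Subtype.ext <| by simpa only [hf] using congrArg c hab
  simpa using Nat.card_le_card_of_injective _ hinj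

lemma le_bStar [Finite W] (hc : IsBStarColoring G k c) : k ≤ bStar G :=
  le_csSup ⟨Nat.card W, fun _ ⟨_, hc'⟩ => hc'.1.le_natCard⟩ ⟨c, hc⟩

lemma IsProperKColoring.induce (hc : IsProperKColoring G k c)
    (hs : ∀ j ∈ Set.Icc 1 k, ∃ v ∈ s, c v = j) :
    IsProperKColoring (G.induce s) k fun v => c v :=
  ⟨fun v => hc.1 v, fun a b hab => hc.2.1 a b hab, fun j hj =>
    let ⟨v, hvs, hv⟩ := hs j hj; ⟨⟨v, hvs⟩, hv⟩⟩

lemma IsBVertex.induce (hu : IsBVertex G k c u) (hus : u ∈ s)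
    (hN : G.neighborSet u ⊆ s) : IsBVertex (G.induce s) k (fun v => c v) ⟨u, hus⟩ := by
  intro j hj hju
  obtain ⟨w, huw, hw⟩ := hu j hj hju
  exact ⟨⟨w, hN huw⟩, huw, hw⟩

lemma IsNiceVertex.induce (hu : IsNiceVertex G k c u) (hus : u ∈ s)
    (hN : G.neighborSet u ⊆ s) (hN₂ : ∀ w, G.Adj u w → G.neighborSet w ⊆ s) :
    IsNiceVertex (G.induce s) k (fun v => c v) ⟨u, hus⟩ := by
  refine ⟨hu.1.induce hus hN, fun j hj hju => ?_⟩
  obtain ⟨w, huw, hw, hwb⟩ := hu.2 j hj hju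
  exact ⟨⟨w, hN huw⟩, huw, hw, hwb.induce (hN huw) (hN₂ w huw)⟩

lemma IsBStarColoring.exists_induce_ball (hc : IsBStarColoring G k c) :
    ∃ u, IsBStarColoring (G.induce (ball G u 2)) k fun v => c v := by
  obtain ⟨hproper, u, hcu, hu⟩ := hc
  have hN : G.neighborSet u ⊆ ball G u 2 := fun w huw =>
    mem_ball_succ_of_adj (mem_ball_self G u 1) huw
  have hN₂ : ∀ w, G.Adj u w → G.neighborSet w ⊆ ball G u 2 := fun w huw x hwx =>
    mem_ball_succ_of_adj (mem_ball_succ_of_adj (mem_ball_self G u 0) huw) hwx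
  have hcolors : ∀ j ∈ Set.Icc 1 k, ∃ v ∈ ball G u 2, c v = j := by
    intro j hj
    by_cases hju : j = c u
    · exact ⟨u, mem_ball_self G u 2, hju.symm⟩
    · obtain ⟨w, huw, hw⟩ := hu.1 j hj hju
      exact ⟨w, hN huw, hw⟩
  exact ⟨u, hproper.induce hcolors, ⟨u, mem_ball_self G u 2⟩, hcu,
    hu.induce (mem_ball_self G u 2) hN hN₂⟩

end Restrict

theorem bStar_locality [Fintype V] (G : SimpleGraph V) :
    bStar G ≤ Finset.univ.sup fun u : V => bStar (G.induce (ball G u 2)) := by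
  refine csSup_le' ?_
  rintro k ⟨c, hc⟩
  obtain ⟨u, hu⟩ := hc.exists_induce_ball
  exact (le_bStar hu).trans
    (Finset.le_sup (f := fun u : V => bStar (G.induce (ball G u 2))) (Finset.mem_univ u))
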